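/- There exists a universal constant C > 0 such that the following holds. Let μ ∈ ℝ and σ_1, σ_2 ≥ 0, let X be Gaussian with mean μ and variance σ_1², let Y be Gaussian with mean μ and variance σ_2², and let T be an integrable real random variable independent of X and independent of Y. Then |E[max(X, T)] − E[max(Y, T)]| ≤ C · |σ_1 − σ_2|. -/
import Mathlib

open MeasureTheory ProbabilityTheory Real

namespace GaussMaxAux

noncomputable def G : Measure ℝ := gaussianReal 0 1

instance : IsProbabilityMeasure G := by unfold G; infer_instance

lemma abs_int_le {α : Type*} [MeasurableSpace α] (m : Measure α) (f : α → ℝ) :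
    |∫ x, f x ∂m| ≤ ∫ x, |f x| ∂m := by
  simpa [Real.norm_eq_abs] using norm_integral_le_integral_norm (μ := m) f

lemma integrable_id_G : Integrable (fun z : ℝ => z) G := by
  have h1 : G = volume.withDensity (gaussianPDF 0 1) :=
    gaussianReal_of_var_ne_zero 0 one_ne_zero
  rw [h1, integrable_withDensity_iff (measurable_gaussianPDF 0 1)
    (ae_of_all _ fun x => by simp [gaussianPDF])]
  have heq : (fun x : ℝ => x * (gaussianPDF 0 1 x).toReal)
      = fun x => (Real.sqrt (2 * π * 1))⁻¹ * (x * Real.exp (-(2⁻¹:ℝ) * x ^ 2)) := by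
    funext x
    rw [gaussianPDF, ENNReal.toReal_ofReal (gaussianPDFReal_nonneg 0 1 x)]
    simp [gaussianPDFReal]
    ring_nf
  rw [heq]
  exact (integrable_mul_exp_neg_mul_sq (by norm_num : (0:ℝ) < 2⁻¹)).const_mul _

lemma map_affine (μ σ : ℝ) (hσ : 0 ≤ σ) :
    Measure.map (fun z => σ * z + μ) G = gaussianReal μ (Real.toNNReal (σ ^ 2)) := by
  have h1 : Measure.map (fun z : ℝ => σ * z) G = gaussianReal 0 (Real.toNNReal (σ ^ 2)) := by
    unfold G
    rw [show (fun z : ℝ => σ * z) = (σ * ·) from rfl, gaussianReal_map_const_mul]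
    congr 1
    · ring
    · ext
      simp [Real.coe_toNNReal _ (sq_nonneg σ)]
  have h2 : Measure.map (fun z : ℝ => σ * z + μ) G
      = Measure.map (· + μ) (Measure.map (fun z : ℝ => σ * z) G) := by
    rw [Measure.map_map (measurable_id'.add_const μ) (measurable_id'.const_mul σ)]
    rfl
  rw [h2, h1, gaussianReal_map_add_const, zero_add]

lemma integrable_id_gauss (μ σ : ℝ) (hσ : 0 ≤ σ) :
    Integrable (fun x : ℝ => x) (gaussianReal μ (Real.toNNReal (σ ^ 2))) := by
  rw [← map_affine μ σ hσ,
    integrable_map_measure (g := fun x : ℝ => x) measurable_id.aestronglyMeasurable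
      ((measurable_id'.const_mul σ).add_const μ).aemeasurable]
  have h : Integrable (fun x : ℝ => σ * x + μ) G :=
    (integrable_id_G.const_mul σ).add (integrable_const μ)
  exact h

lemma lipschitz_gauss_integral {g : ℝ → ℝ} (hgm : Measurable g)
    (hgl : ∀ a b : ℝ, |g a - g b| ≤ |a - b|)
    (μ σ₁ σ₂ : ℝ) (h1 : 0 ≤ σ₁) (h2 : 0 ≤ σ₂) :
    |(∫ x, g x ∂(gaussianReal μ (Real.toNNReal (σ₁ ^ 2)))) -
      ∫ x, g x ∂(gaussianReal μ (Real.toNNReal (σ₂ ^ 2)))| ≤ (∫ z, |z| ∂G) * |σ₁ - σ₂| := by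
  have hint : ∀ σ : ℝ, Integrable (fun z => g (σ * z + μ)) G := by
    intro σ
    refine ((integrable_const |g μ|).add ((integrable_id_G.abs).const_mul |σ|)).mono'
      ((hgm.comp ((measurable_id'.const_mul σ).add_const μ)).aestronglyMeasurable)
      (ae_of_all _ fun z => ?_)
    have h := hgl (σ * z + μ) μ
    have h' : |σ * z + μ - μ| = |σ| * |z| := by
      rw [add_sub_cancel_right, abs_mul]
    calc ‖g (σ * z + μ)‖ = |g (σ * z + μ)| := rfl
      _ ≤ |g (σ * z + μ) - g μ| + |g μ| := by
          have := abs_sub_abs_le_abs_sub (g (σ * z + μ)) (g μ)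
          linarith [abs_abs (g (σ * z + μ)), abs_nonneg (g μ),
            abs_sub_abs_le_abs_sub (g (σ * z + μ)) (g μ)]
      _ ≤ |σ| * |z| + |g μ| := by rw [← h']; linarith [hgl (σ * z + μ) μ]
      _ = |g μ| + |σ| * |z| := by ring
  have hm : ∀ σ : ℝ, ∫ x, g x ∂(gaussianReal μ (Real.toNNReal (σ ^ 2)))
      = ∫ z, g (σ * z + μ) ∂G → True := fun _ _ => trivial
  rw [← map_affine μ σ₁ h1, ← map_affine μ σ₂ h2,
    integral_map ((measurable_id'.const_mul σ₁).add_const μ).aemeasurable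
      hgm.aestronglyMeasurable,
    integral_map ((measurable_id'.const_mul σ₂).add_const μ).aemeasurable
      hgm.aestronglyMeasurable,
    ← integral_sub (hint σ₁) (hint σ₂)]
  calc |∫ z, (g (σ₁ * z + μ) - g (σ₂ * z + μ)) ∂G|
      ≤ ∫ z, |g (σ₁ * z + μ) - g (σ₂ * z + μ)| ∂G := abs_int_le _ _
    _ ≤ ∫ z, |σ₁ - σ₂| * |z| ∂G := by
        refine integral_mono ((hint σ₁).sub (hint σ₂)).abs
          ((integrable_id_G.abs).const_mul _) fun z => ?_
        calc |g (σ₁ * z + μ) - g (σ₂ * z + μ)| ≤ |(σ₁ * z + μ) - (σ₂ * z + μ)| := hgl _ _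
          _ = |σ₁ - σ₂| * |z| := by rw [← abs_mul]; ring_nf
    _ = |σ₁ - σ₂| * ∫ z, |z| ∂G := by rw [integral_const_mul]
    _ = (∫ z, |z| ∂G) * |σ₁ - σ₂| := by ring

end GaussMaxAux

open GaussMaxAux

/-- There is a universal constant `C > 0` such that for Gaussians `X, Y` with the same mean
and an integrable random variable `T` independent of each of them,
`|E[max(X,T)] - E[max(Y,T)]| ≤ C * |σ₁ - σ₂|`. -/
theorem expected_max_with_independent_lipschitz :
    ∃ C : ℝ, 0 < C ∧
      ∀ (Ω : Type) (_ : MeasurableSpace Ω) (P : Measure Ω), IsProbabilityMeasure P →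
      ∀ (μ σ₁ σ₂ : ℝ), 0 ≤ σ₁ → 0 ≤ σ₂ →
      ∀ (X Y T : Ω → ℝ),
        Measurable X → Measurable Y → Measurable T →
        Measure.map X P = gaussianReal μ (Real.toNNReal (σ₁ ^ 2)) →
        Measure.map Y P = gaussianReal μ (Real.toNNReal (σ₂ ^ 2)) →
        Integrable T P →
        IndepFun X T P → IndepFun Y T P →
        |(∫ ω, max (X ω) (T ω) ∂P) - ∫ ω, max (Y ω) (T ω) ∂P| ≤ C * |σ₁ - σ₂| := by
  refine ⟨(∫ z, |z| ∂G) + 1, by positivity, ?_⟩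
  intro Ω mΩ P hP μ σ₁ σ₂ h1 h2 X Y T hXm hYm hTm hmapX hmapY hT hindX hindY
  set ν : Measure ℝ := Measure.map T P with hν
  haveI : IsProbabilityMeasure ν := Measure.isProbabilityMeasure_map hTm.aemeasurable
  have hνint : Integrable (fun t : ℝ => t) ν := by
    rw [hν, integrable_map_measure (g := fun x : ℝ => x) measurable_id.aestronglyMeasurable hTm.aemeasurable]
    exact hT
  set g : ℝ → ℝ := fun x => ∫ t, max x t ∂ν with hg
  have hmaxab : ∀ a b : ℝ, |max a b| ≤ |a| + |b| := fun a b =>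
    (abs_max_le_max_abs_abs).trans (max_le (le_add_of_nonneg_right (abs_nonneg _))
      (le_add_of_nonneg_left (abs_nonneg _)))
  have hia : ∀ x : ℝ, Integrable (fun t => max x t) ν := fun x =>
    ((integrable_const |x|).add hνint.abs).mono'
      ((measurable_const.max measurable_id).aestronglyMeasurable)
      (ae_of_all _ fun t => hmaxab x t)
  have hgl : ∀ a b : ℝ, |g a - g b| ≤ |a - b| := by
    intro a b
    rw [hg]
    rw [← integral_sub (hia a) (hia b)]
    calc |∫ t, (max a t - max b t) ∂ν| ≤ ∫ t, |max a t - max b t| ∂ν :=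
          abs_int_le _ _
      _ ≤ ∫ _, |a - b| ∂ν := by
          refine integral_mono ((hia a).sub (hia b)).abs (integrable_const _) fun t => ?_
          have := abs_max_sub_max_le_max a t b t
          simpa using this.trans (by simp)
      _ = |a - b| := by simp
  have hgm : Measurable g := by
    have lg : LipschitzWith 1 g := LipschitzWith.of_dist_le_mul fun a b => by
      simpa [Real.dist_eq] using hgl a b
    exact lg.continuous.measurable
  -- reduce E[max(X,T)] to ∫ g d(law X)
  have key : ∀ (W : Ω → ℝ), Measurable W → IndepFun W T P →
      Integrable (fun t : ℝ => t) (Measure.map W P) →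
      ∫ ω, max (W ω) (T ω) ∂P = ∫ x, g x ∂(Measure.map W P) := by
    intro W hWm hind hWint
    have hjoint : Measure.map (fun ω => (W ω, T ω)) P = (Measure.map W P).prod ν :=
      (indepFun_iff_map_prod_eq_prod_map_map hWm.aemeasurable hTm.aemeasurable).mp hind
    have hWP : Integrable W P := by
      rwa [integrable_map_measure (g := fun x : ℝ => x) measurable_id.aestronglyMeasurable hWm.aemeasurable] at hWint
    have hmaxint : Integrable (fun ω => max (W ω) (T ω)) P :=
      (hWP.abs.add hT.abs).mono' ((hWm.max hTm).aestronglyMeasurable)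
        (ae_of_all _ fun ω => hmaxab (W ω) (T ω))
    have hprodint : Integrable (fun p : ℝ × ℝ => max p.1 p.2) ((Measure.map W P).prod ν) := by
      rw [← hjoint,
        integrable_map_measure (measurable_fst.max measurable_snd).aestronglyMeasurable
          (hWm.prodMk hTm).aemeasurable]
      exact hmaxint
    calc ∫ ω, max (W ω) (T ω) ∂P
        = ∫ p : ℝ × ℝ, max p.1 p.2 ∂(Measure.map (fun ω => (W ω, T ω)) P) :=
          (integral_map (hWm.prodMk hTm).aemeasurable
            (measurable_fst.max measurable_snd).aestronglyMeasurable).symm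
      _ = ∫ p : ℝ × ℝ, max p.1 p.2 ∂((Measure.map W P).prod ν) := by rw [hjoint]
      _ = ∫ x, ∫ t, max x t ∂ν ∂(Measure.map W P) := integral_prod _ hprodint
      _ = ∫ x, g x ∂(Measure.map W P) := rfl
  have hXint : Integrable (fun t : ℝ => t) (Measure.map X P) := by
    rw [hmapX]; exact integrable_id_gauss μ σ₁ h1
  have hYint : Integrable (fun t : ℝ => t) (Measure.map Y P) := by
    rw [hmapY]; exact integrable_id_gauss μ σ₂ h2
  rw [key X hXm hindX hXint, key Y hYm hindY hYint, hmapX, hmapY]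
  refine (lipschitz_gauss_integral hgm hgl μ σ₁ σ₂ h1 h2).trans ?_
  have hK : (0:ℝ) ≤ ∫ z, |z| ∂G := integral_nonneg fun z => abs_nonneg z
  nlinarith [abs_nonneg (σ₁ - σ₂)]
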